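/- arXiv:1909.06673 — 4 statements merged into one kernel-verified Lean document; each statement's English description precedes it below -/
import Mathlib

section
/- Let φ(x₁,…,x₄) = (x₁∨x₂∨x₃)(x₁∨x₂∨x₄)(x₁∨x₃∨x₄)(x₂∨x₃∨x₄) and let θ'(x,s) be the CNF with auxiliary variables s_{1,1}, s_{2,1}, s_{2,2}, s_{3,2} consisting of the clauses (¬x₁∨s_{1,1}), (¬x₂∨¬s_{1,1}∨s_{2,2}), (¬x₃∨¬s_{2,2}), (¬s_{1,1}∨s_{2,1}), (¬s_{2,2}∨s_{3,2}), (¬x₂∨s_{2,1}), (¬x₃∨¬s_{2,1}∨s_{3,2}), (¬x₄∨¬s_{3,2}). Then φ ∧ θ' is an encoding of the exactly-2 constraint on x₁,…,x₄ which is not unit refutation complete: the formula φ ∧ θ' ∧ ¬s_{3,2} ∧ ¬x₄ is unsatisfiable, but unit propagation does not derive the empty clause from it. -/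
set_option autoImplicit false

universe u v

/-- A literal: a boolean variable together with a polarity. -/
structure Lit (V : Type u) where
  var : V
  pos : Bool

/-- The complementary literal. -/
def Lit.negate {V : Type u} (l : Lit V) : Lit V := ⟨l.var, !l.pos⟩

/-- A literal is satisfied by a total assignment. -/
def Lit.eval {V : Type u} (a : V → Bool) (l : Lit V) : Prop := a l.var = l.pos

/-- A clause is a (finite in all our uses) disjunction of a set of literals. -/
abbrev Clause (V : Type u) := Set (Lit V)

/-- A CNF formula is a conjunction of a set of clauses. -/
abbrev CNF (V : Type u) := Set (Clause V)

/-- A clause is satisfied iff some of its literals is. -/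
def Clause.Sat {V : Type u} (a : V → Bool) (C : Clause V) : Prop := ∃ l ∈ C, Lit.eval a l

/-- A CNF formula is satisfied iff all of its clauses are. -/
def CNF.Sat {V : Type u} (a : V → Bool) (φ : CNF V) : Prop := ∀ C ∈ φ, Clause.Sat a C

def CNF.Satisfiable {V : Type u} (φ : CNF V) : Prop := ∃ a : V → Bool, CNF.Sat a φ

/-- `φ ⊨ l`. -/
def CNF.Entails {V : Type u} (φ : CNF V) (l : Lit V) : Prop :=
  ∀ a : V → Bool, CNF.Sat a φ → Lit.eval a l

/-- A partial assignment, i.e. a set of literals, is consistent if it contains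
no complementary pair of literals. -/
def ConsistentPA {V : Type u} (α : Set (Lit V)) : Prop := ∀ l ∈ α, Lit.negate l ∉ α

/-- The set of unit clauses corresponding to a partial assignment `α`;
`φ ∪ paUnits α` represents `φ ∧ α`. -/
def paUnits {V : Type u} (α : Set (Lit V)) : CNF V := (fun l => ({l} : Clause V)) '' α

/-- Derivability by repeated unit resolution: from a clause `C ∋ l` and the unit
clause `¬l` derive `C \ {l}`.  `UnitDeriv φ ∅` means `φ ⊢₁ ⊥` and
`UnitDeriv φ {l}` means `φ ⊢₁ l`. -/
inductive UnitDeriv {V : Type u} (φ : CNF V) : Clause V → Prop where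
  | base {C : Clause V} : C ∈ φ → UnitDeriv φ C
  | step {C : Clause V} (l : Lit V) : l ∈ C → UnitDeriv φ C →
      UnitDeriv φ {Lit.negate l} → UnitDeriv φ (C \ {l})

/-- The set of variables occurring in a CNF formula. -/
def CNF.vars {V : Type u} (φ : CNF V) : Set V := ⋃ C ∈ φ, Lit.var '' C

/-- All literals of `α` are literals on the variables `W`. -/
def LitsOn {V : Type u} (α : Set (Lit V)) (W : Set V) : Prop := ∀ l ∈ α, l.var ∈ W

/-- `φ` is unit refutation complete on the variables `W`. -/
def URCon {V : Type u} (φ : CNF V) (W : Set V) : Prop :=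
  ∀ α : Set (Lit V), ConsistentPA α → LitsOn α W →
    ¬ CNF.Satisfiable (φ ∪ paUnits α) → UnitDeriv (φ ∪ paUnits α) ∅

/-- `φ` is propagation complete on the variables `W`. -/
def PCon {V : Type u} (φ : CNF V) (W : Set V) : Prop :=
  ∀ α : Set (Lit V), ConsistentPA α → LitsOn α W →
    ∀ l : Lit V, l.var ∈ W → CNF.Entails (φ ∪ paUnits α) l →
      UnitDeriv (φ ∪ paUnits α) {l} ∨ UnitDeriv (φ ∪ paUnits α) ∅

/-- `φ` is a CNF encoding of the function `f` with input variables `X`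
(the remaining variables of `φ` being auxiliary); `f` is assumed to depend
only on the values of the variables in `X`. -/
def IsEncodingOn {V : Type u} (φ : CNF V) (X : Set V) (f : (V → Bool) → Prop) : Prop :=
  ∀ a : V → Bool, f a ↔ ∃ b : V → Bool, (∀ x ∈ X, b x = a x) ∧ CNF.Sat b φ

/-- The positive literal on a variable. -/
def posL {V : Type u} (x : V) : Lit V := ⟨x, true⟩
/-- The negative literal on a variable. -/
def negL {V : Type u} (x : V) : Lit V := ⟨x, false⟩

namespace Seq42

/-- Variables: `0,1,2,3` are `x₁,x₂,x₃,x₄`; `4,5,6,7` are the auxiliary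
variables `s_{1,1}, s_{2,1}, s_{2,2}, s_{3,2}`. -/
abbrev V : Type := Fin 8

/-- `φ(x₁,…,x₄) = (x₁∨x₂∨x₃)(x₁∨x₂∨x₄)(x₁∨x₃∨x₄)(x₂∨x₃∨x₄)`. -/
def phi : CNF V :=
  {{posL 0, posL 1, posL 2}, {posL 0, posL 1, posL 3},
   {posL 0, posL 2, posL 3}, {posL 1, posL 2, posL 3}}

/-- `θ'(x,s)`: the simplified sequential encoding of the at-most-2 constraint,
with the clauses `(¬x₁∨s_{1,1})`, `(¬x₂∨¬s_{1,1}∨s_{2,2})`, `(¬x₃∨¬s_{2,2})`,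
`(¬s_{1,1}∨s_{2,1})`, `(¬s_{2,2}∨s_{3,2})`, `(¬x₂∨s_{2,1})`,
`(¬x₃∨¬s_{2,1}∨s_{3,2})`, `(¬x₄∨¬s_{3,2})`. -/
def theta' : CNF V :=
  {{negL 0, posL 4}, {negL 1, negL 4, posL 6}, {negL 2, negL 6},
   {negL 4, posL 5}, {negL 6, posL 7},
   {negL 1, posL 5}, {negL 2, negL 5, posL 7}, {negL 3, negL 7}}

/-- The partial assignment `¬s_{3,2} ∧ ¬x₄`. -/
def beta : Set (Lit V) := {negL 7, negL 3}

/-- The input variables `x₁, x₂, x₃, x₄`. -/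
def Xset : Set V := {0, 1, 2, 3}

/-- The exactly-2 constraint on `x₁,…,x₄`. -/
def exactly2 (a : V → Bool) : Prop :=
  (({0, 1, 2, 3} : Finset V).filter (fun i => a i = true)).card = 2

end Seq42


namespace Seq42Aux
open Seq42

instance : DecidableEq (Lit Seq42.V) := fun a b =>
  decidable_of_iff (a.var = b.var ∧ a.pos = b.pos) (by cases a; cases b; simp)

abbrev isU (l : Lit V) : Prop := l = negL 7 ∨ l = negL 3 ∨ l = negL 6
abbrev isF (l : Lit V) : Prop := l = posL 7 ∨ l = posL 3 ∨ l = posL 6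

def Inv (C : Clause V) : Prop :=
  (∃ l ∈ C, isU l) ∨ (∃ l₁ ∈ C, ∃ l₂ ∈ C, l₁ ≠ l₂ ∧ ¬ isF l₁ ∧ ¬ isF l₂)

lemma negate_negate (l : Lit V) : l.negate.negate = l := by
  cases l; simp [Lit.negate]

lemma isF_of_isU_negate {l : Lit V} (h : isU (Lit.negate l)) : isF l := by
  rcases h with h | h | h
  · left; rw [← negate_negate l, h]; rfl
  · right; left; rw [← negate_negate l, h]; rfl
  · right; right; rw [← negate_negate l, h]; rfl

lemma not_isF_of_isU {l : Lit V} (h : isU l) : ¬ isF l := by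
  rcases h with rfl | rfl | rfl <;> decide

abbrev psi : CNF V := Seq42.phi ∪ Seq42.theta' ∪ paUnits Seq42.beta

lemma inv_of_deriv {C : Clause V} (h : UnitDeriv psi C) : Inv C := by
  induction h with
  | base hC =>
    simp only [psi, phi, theta', paUnits, beta, Set.mem_union, Set.mem_insert_iff,
      Set.mem_singleton_iff, Set.image_insert_eq, Set.image_singleton] at hC
    rcases hC with ((rfl|rfl|rfl|rfl) | (rfl|rfl|rfl|rfl|rfl|rfl|rfl|rfl)) | (rfl|rfl)
    · exact Or.inr ⟨posL 0, by simp, posL 1, by simp, by decide, by decide, by decide⟩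
    · exact Or.inr ⟨posL 0, by simp, posL 1, by simp, by decide, by decide, by decide⟩
    · exact Or.inr ⟨posL 0, by simp, posL 2, by simp, by decide, by decide, by decide⟩
    · exact Or.inr ⟨posL 1, by simp, posL 2, by simp, by decide, by decide, by decide⟩
    · exact Or.inr ⟨negL 0, by simp, posL 4, by simp, by decide, by decide, by decide⟩
    · exact Or.inr ⟨negL 1, by simp, negL 4, by simp, by decide, by decide, by decide⟩
    · exact Or.inl ⟨negL 6, by simp, by decide⟩
    · exact Or.inr ⟨negL 4, by simp, posL 5, by simp, by decide, by decide, by decide⟩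
    · exact Or.inl ⟨negL 6, by simp, by decide⟩
    · exact Or.inr ⟨negL 1, by simp, posL 5, by simp, by decide, by decide, by decide⟩
    · exact Or.inr ⟨negL 2, by simp, negL 5, by simp, by decide, by decide, by decide⟩
    · exact Or.inl ⟨negL 7, by simp, by decide⟩
    · exact Or.inl ⟨negL 7, by simp, by decide⟩
    · exact Or.inl ⟨negL 3, by simp, by decide⟩
  | step l hl _ _ ih1 ih2 =>
    have hFl : isF l := by
      rcases ih2 with ⟨m, hm, hmU⟩ | ⟨m1, hm1, m2, hm2, hne, _, _⟩
      · rw [Set.mem_singleton_iff] at hm; exact isF_of_isU_negate (hm ▸ hmU)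
      · rw [Set.mem_singleton_iff] at hm1 hm2; exact absurd (hm1.trans hm2.symm) hne
    rcases ih1 with ⟨u, huC, huU⟩ | ⟨l1, h1, l2, h2, hne, hF1, hF2⟩
    · refine Or.inl ⟨u, ⟨huC, ?_⟩, huU⟩
      simp only [Set.mem_singleton_iff]
      rintro rfl; exact not_isF_of_isU huU hFl
    · refine Or.inr ⟨l1, ⟨h1, ?_⟩, l2, ⟨h2, ?_⟩, hne, hF1, hF2⟩
      · simp only [Set.mem_singleton_iff]; rintro rfl; exact hF1 hFl
      · simp only [Set.mem_singleton_iff]; rintro rfl; exact hF2 hFl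

lemma no_deriv : ¬ UnitDeriv psi ∅ := by
  intro h
  rcases inv_of_deriv h with ⟨l, hl, -⟩ | ⟨l, hl, -⟩ <;> exact absurd hl (Set.notMem_empty l)

set_option maxRecDepth 10000 in
set_option maxHeartbeats 4000000 in
set_option synthInstance.maxSize 2000 in
set_option synthInstance.maxHeartbeats 2000000 in
lemma no_sat : ∀ a : V → Bool, ¬ CNF.Sat a psi := by
  simp only [psi, CNF.Sat, Clause.Sat, phi, theta', paUnits, beta, Set.image_insert_eq,
    Set.image_singleton, Set.mem_union, Set.mem_insert_iff, Set.mem_singleton_iff,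
    Lit.eval, posL, negL, forall_eq_or_imp, forall_eq, exists_eq_or_imp, exists_eq_left,
    or_imp, forall_and]
  decide

set_option maxRecDepth 10000 in
set_option maxHeartbeats 4000000 in
set_option synthInstance.maxSize 2000 in
set_option synthInstance.maxHeartbeats 2000000 in
lemma enc : IsEncodingOn (Seq42.phi ∪ Seq42.theta') Seq42.Xset Seq42.exactly2 := by
  simp only [IsEncodingOn, exactly2, CNF.Sat, Clause.Sat, phi, theta', Xset, Set.mem_union,
    Set.mem_insert_iff, Set.mem_singleton_iff, Lit.eval, posL, negL, forall_eq_or_imp,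
    forall_eq, exists_eq_or_imp, exists_eq_left, or_imp, forall_and]
  decide

end Seq42Aux

/-- `φ ∧ θ'` is an encoding of the exactly-2 constraint on
`x₁,…,x₄` which is not unit refutation complete: `φ ∧ θ' ∧ ¬s_{3,2} ∧ ¬x₄` is
unsatisfiable but unit propagation does not derive the empty clause from it. -/
theorem stmt7 :
    IsEncodingOn (Seq42.phi ∪ Seq42.theta') Seq42.Xset Seq42.exactly2 ∧
    ¬ CNF.Satisfiable (Seq42.phi ∪ Seq42.theta' ∪ paUnits Seq42.beta) ∧
    ¬ UnitDeriv (Seq42.phi ∪ Seq42.theta' ∪ paUnits Seq42.beta) ∅ ∧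
    ¬ URCon (Seq42.phi ∪ Seq42.theta') Set.univ := by
  have hunsat : ¬ CNF.Satisfiable (Seq42.phi ∪ Seq42.theta' ∪ paUnits Seq42.beta) := by
    rintro ⟨a, ha⟩; exact Seq42Aux.no_sat a ha
  refine ⟨Seq42Aux.enc, hunsat, Seq42Aux.no_deriv, fun hURC => ?_⟩
  have hcons : ConsistentPA Seq42.beta := by
    rintro l hl
    simp only [Seq42.beta, Set.mem_insert_iff, Set.mem_singleton_iff] at hl ⊢
    rcases hl with rfl | rfl <;> decide
  have hlits : LitsOn Seq42.beta Set.univ := fun _ _ => Set.mem_univ _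
  exact Seq42Aux.no_deriv (hURC Seq42.beta hcons hlits hunsat)
end

section
/- Let D be a smooth DNNF and let T be a subgraph of D. Then T is a minimal satisfying subtree of D if and only if for every i = 1,…,n the intersection of T with D_i is a directed path from the root of D to a leaf in L_i. -/
set_option autoImplicit false

universe u v

/-! ## Smooth DNNFs over variables with finite domains -/

/-- The label of a node of an NNF: an ∧-node, an ∨-node, or a leaf labeled
with the domain variable `⟦x_i = s⟧`. -/
inductive NLabel (n : ℕ) : Type where
  | And : NLabel n
  | Or : NLabel n
  | Leaf : Fin n → ℕ → NLabel n

/-- An NNF: a rooted DAG whose inner nodes are labeled `∧` or `∨` and whose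
leaves are labeled with domain variables `⟦x_i = s⟧` (`s ∈ Dom i`) of the
variables `x₁, …, xₙ` with finite domains `Dom i`.  The edge `edge v u` means
that `u` is a child (an input) of `v`.  Well-formedness conditions are
collected in `NNF.WF`. -/
structure NNF : Type 1 where
  /-- the nodes -/
  N : Type
  /-- `edge v u`: there is an edge from `v` to its child `u` -/
  edge : N → N → Prop
  /-- the root -/
  root : N
  /-- the number of variables -/
  n : ℕ
  /-- the (finite, non-empty) domains of the variables -/
  Dom : Fin n → Set ℕ
  /-- the label of each node -/
  label : N → NLabel n

namespace NNF

/-- Reachability along directed edges. -/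
def Reach (D : NNF) (v u : D.N) : Prop := Relation.ReflTransGen D.edge v u

/-- `var(v)`: the set of variables `x_i` such that a leaf labeled with a domain
variable of `x_i` is reachable from `v`. -/
def varsOf (D : NNF) (v : D.N) : Set (Fin D.n) :=
  {i | ∃ u s, D.Reach v u ∧ D.label u = NLabel.Leaf i s}

/-- `v` is a leaf. -/
def IsLeaf (D : NNF) (v : D.N) : Prop := ∃ i s, D.label v = NLabel.Leaf i s

/-- `H_i`: the set of nodes `v` with `x_i ∈ var(v)`; the subgraph of `D`
induced on `H_i` is `D_i`. -/
def H (D : NNF) (i : Fin D.n) : Set D.N := {v | i ∈ D.varsOf v}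

/-- `L_i`: the set of leaves labeled with domain variables of `x_i`. -/
def Lset (D : NNF) (i : Fin D.n) : Set D.N := {v | ∃ s, D.label v = NLabel.Leaf i s}

/-- Well-formedness of an NNF: the domains are non-empty; the edge relation is
well-founded (the DAG is acyclic); leaves are labeled with domain variables
(`s ∈ Dom i`) and have no outgoing edges; each domain variable labels at most
one leaf; every node is reachable from the root; for each `i` at least one
domain variable of `x_i` labels a leaf; and every node has a leaf below it
(no node represents a constant). -/
def WF (D : NNF) : Prop :=
  (∀ i, (D.Dom i).Nonempty) ∧
  WellFounded (fun u v : D.N => D.edge v u) ∧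
  (∀ v i s, D.label v = NLabel.Leaf i s → s ∈ D.Dom i) ∧
  (∀ v i s, D.label v = NLabel.Leaf i s → ∀ u, ¬ D.edge v u) ∧
  (∀ v w i s, D.label v = NLabel.Leaf i s → D.label w = NLabel.Leaf i s → v = w) ∧
  (∀ v, D.Reach D.root v) ∧
  (∀ i, ∃ v s, D.label v = NLabel.Leaf i s) ∧
  (∀ v, ∃ i, i ∈ D.varsOf v)

/-- Decomposability: the children of every ∧-node have pairwise disjoint sets
of variables. -/
def Decomposable (D : NNF) : Prop :=
  ∀ v, D.label v = NLabel.And →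
    ∀ u₁ u₂, D.edge v u₁ → D.edge v u₂ → u₁ ≠ u₂ →
      Disjoint (D.varsOf u₁) (D.varsOf u₂)

/-- Smoothness: every child of an ∨-node `v` has the same variables as `v`. -/
def Smooth (D : NNF) : Prop :=
  ∀ v u, D.label v = NLabel.Or → D.edge v u → D.varsOf u = D.varsOf v

/-- A node of `D` evaluates to `true` under the assignment `a` of the domain
variables, where the children are taken with respect to the edge relation `E`
(this generality is used when edges are removed from `D`). -/
inductive EvalWith (D : NNF) (E : D.N → D.N → Prop) (a : Fin D.n × ℕ → Bool) : D.N → Prop where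
  | leaf {v : D.N} {i : Fin D.n} {s : ℕ} :
      D.label v = NLabel.Leaf i s → a (i, s) = true → EvalWith D E a v
  | and {v : D.N} : D.label v = NLabel.And →
      (∀ u, E v u → EvalWith D E a u) → EvalWith D E a v
  | or {v u : D.N} : D.label v = NLabel.Or → E v u →
      EvalWith D E a u → EvalWith D E a v

/-- A node of `D` evaluates to `true` under the assignment `a`. -/
def EvalTrue (D : NNF) (a : Fin D.n × ℕ → Bool) (v : D.N) : Prop :=
  D.EvalWith D.edge a v

/-- `f_D(⟦x⟧)`: the monotone boolean function of the domain variables computed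
by `D`. -/
def fD (D : NNF) (a : Fin D.n × ℕ → Bool) : Prop := D.EvalTrue a D.root

/-- The direct encoding constraints: for each `i` exactly one domain variable
of `x_i` is true. -/
def DConsistent (D : NNF) (a : Fin D.n × ℕ → Bool) : Prop :=
  ∀ i, ∃! s, s ∈ D.Dom i ∧ a (i, s) = true

/-- `f_D'(⟦x⟧)`: the conjunction of `f_D` and the direct encoding constraints. -/
def fD' (D : NNF) (a : Fin D.n × ℕ → Bool) : Prop := D.fD a ∧ D.DConsistent a

/-- A subgraph of `D`: a set of nodes together with a set of edges of `D`
between them. -/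
structure Subgraph (D : NNF) : Type where
  mem : Set D.N
  tedge : D.N → D.N → Prop
  le_edge : ∀ {v u}, tedge v u → D.edge v u
  mem_left : ∀ {v u}, tedge v u → v ∈ mem
  mem_right : ∀ {v u}, tedge v u → u ∈ mem

/-- A minimal satisfying subtree of `D`: a rooted subtree (out-arborescence)
of `D` whose root is the root of `D`, which contains all the `D`-edges out of
each of its ∧-nodes and exactly one `D`-edge out of each of its ∨-nodes. -/
def IsMST (D : NNF) (T : D.Subgraph) : Prop :=
  D.root ∈ T.mem ∧
  (∀ v ∈ T.mem, Relation.ReflTransGen T.tedge D.root v) ∧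
  (∀ v ∈ T.mem, v ≠ D.root → ∃! u, T.tedge u v) ∧
  (∀ u, ¬ T.tedge u D.root) ∧
  (∀ v ∈ T.mem, D.label v = NLabel.And → ∀ u, D.edge v u → T.tedge v u) ∧
  (∀ v ∈ T.mem, D.label v = NLabel.Or → ∃! u, T.tedge v u)

/-- `β_T`: the total assignment of the domain variables that sets to `1`
exactly the domain variables labeling the leaves of `T`. -/
noncomputable def beta (D : NNF) (T : D.Subgraph) : Fin D.n × ℕ → Bool :=
  fun p => @decide (∃ v ∈ T.mem, D.label v = NLabel.Leaf p.1 p.2)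
    (Classical.propDecidable _)

/-- A root-to-leaf path in `D_i` (the subgraph of `D` induced on `H_i`),
represented by the list of its nodes. -/
def IsRLPath (D : NNF) (i : Fin D.n) (p : List D.N) : Prop :=
  p ≠ [] ∧ (∀ v ∈ p, v ∈ D.H i) ∧ List.Chain' D.edge p ∧
  p.head? = some D.root ∧ ∃ t, p.getLast? = some t ∧ t ∈ D.Lset i

/-- A separator in `D_i`: a set `S ⊆ H_i` such that every path in `D_i` from
the root to a leaf contains precisely one node of `S`. -/
def IsSeparator (D : NNF) (i : Fin D.n) (S : Set D.N) : Prop :=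
  S ⊆ D.H i ∧ ∀ p, D.IsRLPath i p → ∃! w, w ∈ p ∧ w ∈ S

/-- `D` is covered by the collections `𝒮 i` of separators: each `S ∈ 𝒮 i` is a
separator in `D_i` and the union of `𝒮 i` is `H_i ∖ {ρ}`. -/
def CoveredBy (D : NNF) (𝒮 : ∀ _ : Fin D.n, Set (Set D.N)) : Prop :=
  ∀ i, (∀ S ∈ 𝒮 i, D.IsSeparator i S) ∧ ⋃₀ 𝒮 i = D.H i \ {D.root}

/-- `D` can be covered by separators. -/
def Covered (D : NNF) : Prop := ∃ 𝒮, D.CoveredBy 𝒮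

end NNF

/-- `S` together with the edge relation `E` forms a directed path from `start`
to a node in `fin`: there is a nonempty duplicate-free list `p` of nodes
beginning with `start` and ending in `fin` whose set of members is `S` and
such that `E` holds exactly between the consecutive members of `p`. -/
def IsDirPath {N : Type} (E : N → N → Prop) (S : Set N) (start : N)
    (fin : Set N) : Prop :=
  ∃ p : List N, p ≠ [] ∧ p.Nodup ∧ List.Chain' E p ∧
    p.head? = some start ∧ (∃ t, p.getLast? = some t ∧ t ∈ fin) ∧
    S = {v | v ∈ p} ∧ (∀ a b, E a b → (a, b) ∈ p.zip p.tail)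

/-! In a minimal satisfying subtree `T` of a smooth DNNF, a node of `T ∩ D_i` outside `L_i` has
exactly one `T`-child in `D_i`: at an ∧-node all children are in `T` and decomposability lets only
one of them contain `x_i`; at an ∨-node `T` keeps one child, which lies in `D_i` by smoothness.
Following these children from the root terminates (`D` is acyclic) and yields a path, and it
exhausts `T ∩ D_i` because `D_i` is closed under taking parents. Conversely, every node lies in
some `D_i`, so each defining property of a minimal satisfying subtree at a node `v` can be read
off the path through `v` (or through the child in question) of a suitable variable. -/

theorem WellFounded.not_transGen_self {α : Type*} {r : α → α → Prop}
    (h : WellFounded (flip r)) (a : α) : ¬ Relation.TransGen r a a := fun ha =>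
  h.transGen.irrefl.irrefl a (Relation.transGen_swap.mpr ha)

namespace List

variable {α : Type*} {R : α → α → Prop} {l : List α} {a b : α}

theorem mem_zip_tail_iff :
    (a, b) ∈ l.zip l.tail ↔ ∃ i, ∃ _ : i + 1 < l.length, l[i] = a ∧ l[i + 1] = b := by
  simp only [mem_iff_getElem, getElem_zip, getElem_tail, length_zip, length_tail, Prod.mk.injEq]
  exact ⟨fun ⟨i, _, h⟩ => ⟨i, by omega, h⟩, fun ⟨i, _, h⟩ => ⟨i, by omega, h⟩⟩

theorem IsChain.rel_of_mem_zip_tail (hl : l.IsChain R) (h : (a, b) ∈ l.zip l.tail) : R a b := by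
  obtain ⟨i, hi, rfl, rfl⟩ := mem_zip_tail_iff.mp h
  exact isChain_iff_getElem.mp hl i hi

theorem Nodup.rightUnique_zip_tail (hl : l.Nodup) :
    Relator.RightUnique fun a b => (a, b) ∈ l.zip l.tail := by
  intro a b c hab hac
  obtain ⟨i, hi, rfl, rfl⟩ := mem_zip_tail_iff.mp hab
  obtain ⟨j, hj, hji, rfl⟩ := mem_zip_tail_iff.mp hac
  obtain rfl : j = i := (hl.getElem_inj_iff).mp hji
  rfl

theorem Nodup.leftUnique_zip_tail (hl : l.Nodup) :
    Relator.LeftUnique fun a b => (a, b) ∈ l.zip l.tail := by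
  intro a b c hac hbc
  obtain ⟨i, hi, rfl, rfl⟩ := mem_zip_tail_iff.mp hac
  obtain ⟨j, hj, rfl, hji⟩ := mem_zip_tail_iff.mp hbc
  obtain rfl : j = i := by simpa using (hl.getElem_inj_iff).mp hji
  rfl

theorem exists_mem_zip_tail_of_ne_getLast (ha : a ∈ l)
    (hne : a ≠ l.getLast (ne_nil_of_mem ha)) :
    ∃ b, (a, b) ∈ l.zip l.tail := by
  obtain ⟨i, hi, rfl⟩ := mem_iff_getElem.mp ha
  have : i + 1 < l.length := by
    by_contra! h
    exact hne (by rw [getLast_eq_getElem]; congr; omega)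
  exact ⟨l[i + 1], mem_zip_tail_iff.mpr ⟨i, this, rfl, rfl⟩⟩

theorem IsChain.nodup_of_wellFounded (hwf : WellFounded (flip R)) (hl : l.IsChain R) : l.Nodup := by
  have hT : l.Pairwise (Relation.TransGen R) :=
    isChain_iff_pairwise.mp (hl.imp fun _ _ => Relation.TransGen.single)
  refine hT.imp ?_
  rintro a _ hab rfl
  exact hwf.not_transGen_self a hab

end List

theorem WellFounded.exists_isChain_cons_getLast_mem {N : Type*} {E : N → N → Prop}
    {S fin : Set N} (hwf : WellFounded (flip E))
    (hsucc : ∀ v ∈ S, v ∉ fin → ∃ w, E v w ∧ w ∈ S) {v : N} (hv : v ∈ S) :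
    ∃ q, (v :: q).IsChain E ∧ (v :: q).getLast (List.cons_ne_nil v q) ∈ fin := by
  induction v using hwf.induction with
  | _ v ih =>
    by_cases hvfin : v ∈ fin
    · exact ⟨[], List.isChain_singleton v, hvfin⟩
    obtain ⟨w, hvw, hw⟩ := hsucc v hv hvfin
    obtain ⟨q, hq, hlast⟩ := ih w hvw hw
    exact ⟨w :: q, List.IsChain.cons_cons hvw hq, by rwa [List.getLast_cons_cons]⟩

namespace IsDirPath

variable {N : Type} {E : N → N → Prop} {S fin : Set N} {s : N}

theorem of_rightUnique (hwf : WellFounded (flip E)) (huniq : Relator.RightUnique E)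
    (hs : s ∈ S) (hmem : ∀ a b, E a b → a ∈ S ∧ b ∈ S)
    (hreach : ∀ v ∈ S, Relation.ReflTransGen E s v)
    (hsucc : ∀ v ∈ S, v ∉ fin → ∃ w, E v w) (hfin : ∀ v ∈ fin, ∀ w, ¬ E v w) :
    IsDirPath E S s fin := by
  obtain ⟨q, hchain, hlast⟩ := hwf.exists_isChain_cons_getLast_mem
    (fun v hv hvfin => (hsucc v hv hvfin).imp fun w hvw => ⟨hvw, (hmem v w hvw).2⟩) hs
  set p := s :: q
  have hnext : ∀ a b, a ∈ p → E a b → (a, b) ∈ p.zip p.tail := by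
    intro a b ha hab
    have hne : a ≠ p.getLast (List.cons_ne_nil s q) := by
      rintro rfl
      exact hfin _ hlast b hab
    obtain ⟨c, hac⟩ := List.exists_mem_zip_tail_of_ne_getLast ha hne
    rwa [huniq hab (hchain.rel_of_mem_zip_tail hac)]
  have hreach_mem : ∀ v, Relation.ReflTransGen E s v → v ∈ p := by
    intro v hv
    induction hv with
    | refl => exact List.mem_cons_self
    | tail _ hbc ih => exact List.mem_of_mem_tail (List.of_mem_zip (hnext _ _ ih hbc)).2
  have hS : S = {v | v ∈ p} := by
    ext v
    refine ⟨fun hv => hreach_mem v (hreach v hv), fun hv => ?_⟩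
    exact hchain.induction (· ∈ S) p (fun a b hab _ => (hmem a b hab).2) (fun _ => hs) v hv
  refine ⟨p, List.cons_ne_nil s q, hchain.nodup_of_wellFounded hwf, hchain, rfl,
    ⟨_, List.getLast?_eq_some_getLast (List.cons_ne_nil s q), hlast⟩, hS, fun a b hab => ?_⟩
  exact hnext a b (hS.subset (hmem a b hab).1) hab

theorem start_mem (h : IsDirPath E S s fin) : s ∈ S := by
  obtain ⟨p, -, -, -, hhead, -, rfl, -⟩ := h
  exact List.mem_of_mem_head? hhead

theorem reflTransGen_start (h : IsDirPath E S s fin) {v : N} (hv : v ∈ S) :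
    Relation.ReflTransGen E s v := by
  obtain ⟨p, -, -, hchain, hhead, -, rfl, -⟩ := h
  obtain ⟨q, rfl⟩ := List.head?_eq_some_iff.mp hhead
  exact hchain.induction (Relation.ReflTransGen E s ·) _ (fun _ _ hab ha => ha.tail hab)
    (fun _ => .refl) v hv

theorem exists_rel_of_notMem (h : IsDirPath E S s fin) {v : N} (hv : v ∈ S) (hvfin : v ∉ fin) :
    ∃ w, E v w := by
  obtain ⟨p, hne, -, hchain, -, ⟨t, hlast, htfin⟩, rfl, -⟩ := h
  obtain rfl : p.getLast hne = t :=
    Option.some.inj ((List.getLast?_eq_some_getLast hne).symm.trans hlast)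
  obtain ⟨w, hvw⟩ := List.exists_mem_zip_tail_of_ne_getLast hv fun hvt => hvfin (hvt ▸ htfin)
  exact ⟨w, hchain.rel_of_mem_zip_tail hvw⟩

theorem rightUnique (h : IsDirPath E S s fin) : Relator.RightUnique E := by
  obtain ⟨p, -, hnodup, -, -, -, -, hzip⟩ := h
  exact fun a b c hab hac => hnodup.rightUnique_zip_tail (hzip a b hab) (hzip a c hac)

theorem leftUnique (h : IsDirPath E S s fin) : Relator.LeftUnique E := by
  obtain ⟨p, -, hnodup, -, -, -, -, hzip⟩ := h
  exact fun a b c hac hbc => hnodup.leftUnique_zip_tail (hzip a c hac) (hzip b c hbc)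

end IsDirPath

theorem Relation.ReflTransGen.restrict_of_backward_closed {α : Type*} {r : α → α → Prop}
    {P : α → Prop} {a b : α} (h : Relation.ReflTransGen r a b) (hb : P b)
    (hP : ∀ x y, r x y → P y → P x) :
    Relation.ReflTransGen (fun x y => r x y ∧ P x ∧ P y) a b := by
  suffices Relation.ReflTransGen (fun x y => r x y ∧ P x ∧ P y) a b ∧ P a from this.1
  induction h using Relation.ReflTransGen.head_induction_on with
  | refl => exact ⟨.refl, hb⟩
  | head hac _ ih =>
    have ha := hP _ _ hac ih.2
    exact ⟨.head ⟨hac, ha, ih.2⟩ ih.1, ha⟩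

namespace NNF

variable {D : NNF}

namespace WF

theorem wellFounded (hwf : D.WF) : WellFounded (flip D.edge) := hwf.2.1

theorem not_edge_of_label_eq_leaf (hwf : D.WF) {v : D.N} {i : Fin D.n} {s : ℕ}
    (hv : D.label v = .Leaf i s) (u : D.N) : ¬ D.edge v u :=
  hwf.2.2.2.1 v i s hv u

theorem reach_root (hwf : D.WF) (v : D.N) : D.Reach D.root v := hwf.2.2.2.2.2.1 v

theorem exists_mem_H (hwf : D.WF) (v : D.N) : ∃ i, v ∈ D.H i := hwf.2.2.2.2.2.2.2 v

theorem root_mem_H (hwf : D.WF) (i : Fin D.n) : D.root ∈ D.H i := by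
  obtain ⟨v, s, hv⟩ := hwf.2.2.2.2.2.2.1 i
  exact ⟨v, s, hwf.reach_root v, hv⟩

theorem not_edge_root (hwf : D.WF) (u : D.N) : ¬ D.edge u D.root := fun hu =>
  hwf.wellFounded.not_transGen_self u (.head' hu (hwf.reach_root u))

end WF

theorem mem_H_of_edge {v u : D.N} {i : Fin D.n} (hvu : D.edge v u) (hu : u ∈ D.H i) :
    v ∈ D.H i := by
  obtain ⟨w, s, huw, hw⟩ := hu
  exact ⟨w, s, .head hvu huw, hw⟩

theorem exists_edge_mem_H_of_notMem_Lset {v : D.N} {i : Fin D.n} (hv : v ∈ D.H i)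
    (hvL : v ∉ D.Lset i) : ∃ u, D.edge v u ∧ u ∈ D.H i := by
  obtain ⟨w, s, hvw, hw⟩ := hv
  rcases hvw.cases_head with rfl | ⟨u, hvu, huw⟩
  · exact absurd ⟨s, hw⟩ hvL
  · exact ⟨u, hvu, w, s, huw, hw⟩

def Subgraph.edgeOn (T : D.Subgraph) (i : Fin D.n) (a b : D.N) : Prop :=
  T.tedge a b ∧ a ∈ D.H i ∧ b ∈ D.H i

namespace IsMST

variable {T : D.Subgraph}

theorem rightUnique_edgeOn (hwf : D.WF) (hdec : D.Decomposable) (hT : D.IsMST T)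
    (i : Fin D.n) : Relator.RightUnique (T.edgeOn i) := by
  rintro v u u' ⟨hvu, -, hu⟩ ⟨hvu', -, hu'⟩
  cases hlab : D.label v with
  | And =>
    by_contra hne
    exact Set.disjoint_left.mp (hdec v hlab u u' (T.le_edge hvu) (T.le_edge hvu') hne) hu hu'
  | Or =>
    obtain ⟨w, -, hw⟩ := hT.2.2.2.2.2 v (T.mem_left hvu) hlab
    exact (hw u hvu).trans (hw u' hvu').symm
  | Leaf j s => exact absurd (T.le_edge hvu) (hwf.not_edge_of_label_eq_leaf hlab u)

theorem exists_edgeOn (hwf : D.WF) (hsm : D.Smooth) (hT : D.IsMST T) {v : D.N} {i : Fin D.n}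
    (hv : v ∈ T.mem) (hvi : v ∈ D.H i) (hvL : v ∉ D.Lset i) : ∃ u, T.edgeOn i v u := by
  obtain ⟨u, hvu, hu⟩ := exists_edge_mem_H_of_notMem_Lset hvi hvL
  cases hlab : D.label v with
  | And => exact ⟨u, hT.2.2.2.2.1 v hv hlab u hvu, hvi, hu⟩
  | Or =>
    obtain ⟨w, hvw, -⟩ := hT.2.2.2.2.2 v hv hlab
    refine ⟨w, hvw, hvi, ?_⟩
    show i ∈ D.varsOf w
    rwa [hsm v w hlab (T.le_edge hvw)]
  | Leaf j s => exact absurd hvu (hwf.not_edge_of_label_eq_leaf hlab u)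

theorem reflTransGen_edgeOn (hT : D.IsMST T) {v : D.N} {i : Fin D.n} (hv : v ∈ T.mem)
    (hvi : v ∈ D.H i) : Relation.ReflTransGen (T.edgeOn i) D.root v :=
  (hT.2.1 v hv).restrict_of_backward_closed hvi fun _ _ h => mem_H_of_edge (T.le_edge h)

theorem isDirPath_edgeOn (hwf : D.WF) (hdec : D.Decomposable) (hsm : D.Smooth)
    (hT : D.IsMST T) (i : Fin D.n) :
    IsDirPath (T.edgeOn i) (T.mem ∩ D.H i) D.root (D.Lset i) :=
  .of_rightUnique (Subrelation.wf (fun h => T.le_edge h.1) hwf.wellFounded)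
    (hT.rightUnique_edgeOn hwf hdec i) ⟨hT.1, hwf.root_mem_H i⟩
    (fun _ _ ⟨h, ha, hb⟩ => ⟨⟨T.mem_left h, ha⟩, T.mem_right h, hb⟩)
    (fun _ hv => hT.reflTransGen_edgeOn hv.1 hv.2)
    (fun _ hv hvL => hT.exists_edgeOn hwf hsm hv.1 hv.2 hvL)
    (fun _ ⟨_, hv⟩ w h => hwf.not_edge_of_label_eq_leaf hv w (T.le_edge h.1))

end IsMST

theorem isMST_of_isDirPath (hwf : D.WF) (hdec : D.Decomposable) (hsm : D.Smooth)
    {T : D.Subgraph}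
    (hpath : ∀ i, IsDirPath (T.edgeOn i) (T.mem ∩ D.H i) D.root (D.Lset i)) : D.IsMST T := by
  obtain ⟨i₀, -⟩ := hwf.exists_mem_H D.root
  refine ⟨(hpath i₀).start_mem.1, fun v hv => ?_, fun v hv hne => ?_,
    fun u hu => hwf.not_edge_root u (T.le_edge hu), fun v hv hlab u hvu => ?_,
    fun v hv hlab => ?_⟩
  · obtain ⟨i, hi⟩ := hwf.exists_mem_H v
    exact Relation.ReflTransGen.mono (fun _ _ h => h.1) _ _
      ((hpath i).reflTransGen_start ⟨hv, hi⟩)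
  · obtain ⟨i, hi⟩ := hwf.exists_mem_H v
    obtain ⟨u, -, hu⟩ := ((hpath i).reflTransGen_start ⟨hv, hi⟩).cases_tail.resolve_left hne
    exact ⟨u, hu.1, fun u' hu' =>
      (hpath i).leftUnique ⟨hu', mem_H_of_edge (T.le_edge hu') hi, hi⟩ hu⟩
  · obtain ⟨i, hi⟩ := hwf.exists_mem_H u
    obtain ⟨w, hvw⟩ := (hpath i).exists_rel_of_notMem ⟨hv, mem_H_of_edge hvu hi⟩
      (by rintro ⟨s, hs⟩; simp [hlab] at hs)
    obtain rfl : u = w := by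
      by_contra hne
      exact Set.disjoint_left.mp (hdec v hlab u w hvu (T.le_edge hvw.1) hne) hi hvw.2.2
    exact hvw.1
  · obtain ⟨i, hi⟩ := hwf.exists_mem_H v
    obtain ⟨w, hvw⟩ := (hpath i).exists_rel_of_notMem ⟨hv, hi⟩
      (by rintro ⟨s, hs⟩; simp [hlab] at hs)
    refine ⟨w, hvw.1, fun u hvu => (hpath i).rightUnique ⟨hvu, hi, ?_⟩ hvw⟩
    show i ∈ D.varsOf u
    rwa [hsm v u hlab (T.le_edge hvu)]

end NNF

/-- Let `D` be a smooth DNNF and `T` a subgraph of `D`.  Then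
`T` is a minimal satisfying subtree of `D` iff for every `i` the intersection
of `T` with `D_i` is a directed path from the root of `D` to a leaf in `L_i`. -/
theorem stmt9 (D : NNF) (hwf : D.WF) (hdec : D.Decomposable) (hsm : D.Smooth)
    (T : D.Subgraph) :
    D.IsMST T ↔ ∀ i : Fin D.n,
      IsDirPath (fun a b => T.tedge a b ∧ a ∈ D.H i ∧ b ∈ D.H i)
        (T.mem ∩ D.H i) D.root (D.Lset i) :=
  ⟨fun hT => hT.isDirPath_edgeOn hwf hdec hsm, NNF.isMST_of_isDirPath hwf hdec hsm⟩
end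

section
/- Let D be a smooth DNNF and let (v,u) be a transitive edge of D, i.e., there is a path in D from v to u not using the edge (v,u). Then the DNNF D' obtained from D by removing the edge (v,u) computes the same function as D. -/
set_option autoImplicit false

universe u v

/-!
Removing `(v,u)` can only matter at an ∧-node `v` or at an ∨-node `v` that relies on `u`.
The first case is impossible: by decomposability the child `u` of `v` cannot share a
variable with the child `w` where the other path to `u` starts. In the second case, smoothness
gives `var(w) = var(v) = var(u)`, so every ∧-node on the path from `w` to `u` has all its
variables below its successor on the path; by decomposability that successor is its only
child, and truth of `u` propagates up the path to `w`, hence to `v`.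
-/

namespace NNF

variable {D : NNF}

theorem reach_of_reflTransGen {E : D.N → D.N → Prop} (hE : ∀ {x y}, E x y → D.edge x y)
    {p q : D.N} (h : Relation.ReflTransGen E p q) : D.Reach p q :=
  Relation.ReflTransGen.mono (fun _ _ => hE) _ _ h

theorem varsOf_subset_of_reach {p q : D.N} (h : D.Reach p q) : D.varsOf q ⊆ D.varsOf p :=
  fun _ ⟨w, s, hw, hs⟩ => ⟨w, s, h.trans hw, hs⟩

theorem varsOf_subset_of_edge {p q : D.N} (h : D.edge p q) : D.varsOf q ⊆ D.varsOf p :=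
  varsOf_subset_of_reach (Relation.ReflTransGen.single h)

theorem WF.not_edge_of_label_eq_leaf_s10 (hwf : D.WF) {p q : D.N} {i : Fin D.n} {s : ℕ}
    (hp : D.label p = NLabel.Leaf i s) : ¬ D.edge p q :=
  hwf.2.2.2.1 p i s hp q

theorem WF.varsOf_nonempty (hwf : D.WF) (p : D.N) : (D.varsOf p).Nonempty :=
  hwf.2.2.2.2.2.2.2 p

theorem Decomposable.eq_of_varsOf_subset (hdec : D.Decomposable) (hwf : D.WF) {p c q : D.N}
    (hp : D.label p = NLabel.And) (hc : D.edge p c) (hq : D.edge p q)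
    (hsub : D.varsOf c ⊆ D.varsOf q) : c = q := by
  by_contra hne
  obtain ⟨i, hi⟩ := hwf.varsOf_nonempty c
  exact Set.disjoint_left.mp (hdec p hp c q hc hq hne) hi (hsub hi)

theorem evalWith_of_reflTransGen (hwf : D.WF) (hdec : D.Decomposable)
    {E : D.N → D.N → Prop} (hE : ∀ {x y}, E x y → D.edge x y)
    {a : Fin D.n × ℕ → Bool} {w u : D.N} (hwu : Relation.ReflTransGen E w u)
    (hsub : D.varsOf w ⊆ D.varsOf u) (hu : D.EvalWith E a u) : D.EvalWith E a w := by
  induction hwu using Relation.ReflTransGen.head_induction_on with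
  | refl => exact hu
  | @head p q hpq hqu ih =>
    have hq : D.EvalWith E a q := ih ((varsOf_subset_of_edge (hE hpq)).trans hsub)
    have hpq_vars : D.varsOf p ⊆ D.varsOf q :=
      hsub.trans (varsOf_subset_of_reach (reach_of_reflTransGen hE hqu))
    rcases hlab : D.label p with _ | _ | ⟨i, s⟩
    · refine EvalWith.and hlab fun c hpc => ?_
      have hcq : c = q := hdec.eq_of_varsOf_subset hwf hlab (hE hpc) (hE hpq)
        ((varsOf_subset_of_edge (hE hpc)).trans hpq_vars)
      exact hcq ▸ hq
    · exact EvalWith.or hlab hpq hq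
    · exact absurd (hE hpq) (hwf.not_edge_of_label_eq_leaf_s10 hlab)

def removeEdge (D : NNF) (v u : D.N) : D.N → D.N → Prop :=
  fun p q => D.edge p q ∧ ¬ (p = v ∧ q = u)

theorem removeEdge_le_edge {v u p q : D.N} (h : D.removeEdge v u p q) : D.edge p q := h.1

variable {v u : D.N}

theorem label_ne_and_of_transGen_removeEdge (hwf : D.WF) (hdec : D.Decomposable)
    (hvu : D.edge v u) (hpath : Relation.TransGen (D.removeEdge v u) v u) :
    D.label v ≠ NLabel.And := by
  intro hv
  obtain ⟨w, ⟨hvw, hne⟩, hwu⟩ := Relation.TransGen.head'_iff.mp hpath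
  have hsub : D.varsOf u ⊆ D.varsOf w :=
    varsOf_subset_of_reach (reach_of_reflTransGen removeEdge_le_edge hwu)
  exact hne ⟨rfl, (hdec.eq_of_varsOf_subset hwf hv hvu hvw hsub).symm⟩

theorem evalWith_removeEdge_of_evalWith (hwf : D.WF) (hdec : D.Decomposable)
    (hsm : D.Smooth) (hpath : Relation.TransGen (D.removeEdge v u) v u)
    {a : Fin D.n × ℕ → Bool} {x : D.N} (hx : D.EvalWith D.edge a x) :
    D.EvalWith (D.removeEdge v u) a x := by
  induction hx with
  | leaf hl ha => exact EvalWith.leaf hl ha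
  | and hl _ ih => exact EvalWith.and hl fun c hc => ih c hc.1
  | @or p q hl hpq _ ih =>
    by_cases hvu : p = v ∧ q = u
    · obtain ⟨rfl, rfl⟩ := hvu
      obtain ⟨w, hpw, hwq⟩ := Relation.TransGen.head'_iff.mp hpath
      have hw : D.varsOf w ⊆ D.varsOf q := by
        rw [hsm p w hl hpw.1, hsm p q hl hpq]
      exact EvalWith.or hl hpw
        (evalWith_of_reflTransGen hwf hdec removeEdge_le_edge hwq hw ih)
    · exact EvalWith.or hl ⟨hpq, hvu⟩ ih

theorem evalWith_of_evalWith_removeEdge (hwf : D.WF) (hdec : D.Decomposable)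
    (hpath : Relation.TransGen (D.removeEdge v u) v u)
    {a : Fin D.n × ℕ → Bool} {x : D.N} (hx : D.EvalWith (D.removeEdge v u) a x) :
    D.EvalWith D.edge a x := by
  induction hx with
  | leaf hl ha => exact EvalWith.leaf hl ha
  | @and p hl _ ih =>
    refine EvalWith.and hl fun c hpc => ih c ⟨hpc, ?_⟩
    rintro ⟨rfl, rfl⟩
    exact label_ne_and_of_transGen_removeEdge hwf hdec hpc hpath hl
  | or hl hpq _ ih => exact EvalWith.or hl hpq.1 ih

end NNF

theorem stmt10_general (D : NNF) (hwf : D.WF) (hdec : D.Decomposable) (hsm : D.Smooth)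
    (v u : D.N)
    (hpath : Relation.TransGen
      (fun p q => D.edge p q ∧ ¬ (p = v ∧ q = u)) v u)
    (a : Fin D.n × ℕ → Bool) :
    D.EvalWith D.edge a D.root ↔
      D.EvalWith (fun p q => D.edge p q ∧ ¬ (p = v ∧ q = u)) a D.root :=
  ⟨NNF.evalWith_removeEdge_of_evalWith hwf hdec hsm hpath,
    NNF.evalWith_of_evalWith_removeEdge hwf hdec hpath⟩

/-- Let `D` be a smooth DNNF and `(v,u)` a transitive edge
of `D`, i.e. there is a path in `D` from `v` to `u` not using the edge
`(v,u)`.  Then removing the edge `(v,u)` from `D` does not change the computed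
function. -/
theorem stmt10 (D : NNF) (hwf : D.WF) (hdec : D.Decomposable) (hsm : D.Smooth)
    (v u : D.N) (hvu : D.edge v u)
    (hpath : Relation.TransGen
      (fun p q => D.edge p q ∧ ¬ (p = v ∧ q = u)) v u)
    (a : Fin D.n × ℕ → Bool) :
    D.EvalWith D.edge a D.root ↔
      D.EvalWith (fun p q => D.edge p q ∧ ¬ (p = v ∧ q = u)) a D.root :=
  stmt10_general D hwf hdec hsm v u hpath a
end

section
/- If a DNNF D contains a transitive edge, then D cannot be covered by separators. -/
set_option autoImplicit false

universe u v

/-!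
Let `v → u` be the transitive edge, `v → w ⇝ u` a second path from `v` to `u`, and `t` a leaf
of some variable `x_i` below `u`. Extend `v → u ⇝ t` and `v → w ⇝ u ⇝ t` by one and the same
path from the root to `v`: this gives two root-to-leaf paths `p` and `q` of `D_i` such that every
node of `p` lies on `q`, while acyclicity keeps `w` off `p`. Now `w ≠ ρ`, so `w` lies in some
separator `S`. The node of `S` on `p` also lies on `q`, so `q` meets `S` in two nodes.
-/

open Relation

theorem not_transGen_self_of_wellFounded_swap {α : Type*} {r : α → α → Prop}
    (h : WellFounded (Function.swap r)) (a : α) : ¬ TransGen r a a :=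
  fun ha => h.transGen.irrefl.irrefl a (transGen_swap.2 ha)

theorem exists_rel_transGen_of_transGen_without {α : Type*} {r : α → α → Prop} {a b : α}
    (h : TransGen (fun x y => r x y ∧ ¬ (x = a ∧ y = b)) a b) : ∃ c, r a c ∧ TransGen r c b := by
  obtain ⟨c, ⟨hac, hne⟩, hcb⟩ := TransGen.head'_iff.1 h
  have hcb : ReflTransGen r c b := ReflTransGen.mono (fun _ _ hxy => hxy.1) _ _ hcb
  refine ⟨c, hac, (reflTransGen_iff_eq_or_transGen.1 hcb).resolve_left ?_⟩
  rintro rfl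
  exact hne ⟨rfl, rfl⟩

namespace List

variable {α : Type*} {r : α → α → Prop} {a b c d x : α} {p q : List α}

def IsWalk (r : α → α → Prop) (a b : α) (p : List α) : Prop :=
  p.IsChain r ∧ p.head? = some a ∧ p.getLast? = some b

theorem exists_isWalk_of_reflTransGen (h : ReflTransGen r a b) : ∃ p : List α, p.IsWalk r a b := by
  obtain ⟨l, hl, hlast⟩ := exists_isChain_cons_of_relationReflTransGen h
  exact ⟨a :: l, hl, rfl, by rw [getLast?_eq_some_getLast (cons_ne_nil _ _), hlast]⟩

theorem IsWalk.ne_nil (hp : p.IsWalk r a b) : p ≠ [] := by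
  rintro rfl
  simp [IsWalk] at hp

theorem IsWalk.start_mem (hp : p.IsWalk r a b) : a ∈ p :=
  mem_of_mem_head? hp.2.1

theorem IsWalk.append (hp : p.IsWalk r a b) (hq : q.IsWalk r c d) (hbc : r b c) :
    (p ++ q).IsWalk r a d := by
  refine ⟨hp.1.append hq.1 (by simpa [hp.2.2, hq.2.1] using hbc), ?_, ?_⟩
  · rw [head?_append_of_ne_nil _ hp.ne_nil, hp.2.1]
  · rw [getLast?_append_of_ne_nil _ hq.ne_nil, hq.2.2]

theorem IsWalk.reflTransGen_to_mem (hp : p.IsWalk r a b) (hx : x ∈ p) : ReflTransGen r a x := by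
  obtain ⟨l, rfl⟩ := head?_eq_some_iff.1 hp.2.1
  exact hp.1.induction _ _ (fun _ _ hyz hy => hy.tail hyz) (fun _ => .refl) x hx

theorem IsWalk.reflTransGen_from_mem (hp : p.IsWalk r a b) (hx : x ∈ p) :
    ReflTransGen r x b := by
  obtain ⟨l, rfl⟩ := getLast?_eq_some_iff.1 hp.2.2
  refine hp.1.backwards_induction (ReflTransGen r · b) _ (fun _ _ hyz hz => hz.head hyz)
    (fun _ => ?_) x hx
  rw [getLast_concat]

end List

theorem exists_isWalk_subset_bypassing {α : Type*} {r : α → α → Prop}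
    (hacyc : ∀ x, ¬ TransGen r x x) {ρ v u w t : α} (hρv : ReflTransGen r ρ v) (hvu : r v u)
    (hvw : r v w) (hwu : TransGen r w u) (hut : ReflTransGen r u t) :
    ∃ p q : List α, p.IsWalk r ρ t ∧ q.IsWalk r ρ t ∧ p ⊆ q ∧ w ∈ q ∧ w ∉ p := by
  obtain ⟨R, hR⟩ := List.exists_isWalk_of_reflTransGen hρv
  obtain ⟨Q, hQ⟩ := List.exists_isWalk_of_reflTransGen hut
  obtain ⟨y, hwy, hyu⟩ := TransGen.tail'_iff.1 hwu
  obtain ⟨M, hM⟩ := List.exists_isWalk_of_reflTransGen hwy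
  refine ⟨R ++ Q, R ++ (M ++ Q), hR.append hQ hvu, hR.append (hM.append hQ hyu) hvw,
    fun x hx => by simp only [List.mem_append] at hx ⊢; tauto,
    List.mem_append_right _ (List.mem_append_left _ hM.start_mem), fun hw => ?_⟩
  rcases List.mem_append.1 hw with hwR | hwQ
  · exact hacyc w (.tail' (hR.reflTransGen_from_mem hwR) hvw)
  · exact hacyc w (hwu.trans_left (hQ.reflTransGen_to_mem hwQ))

namespace NNF

variable {D : NNF} {i : Fin D.n} {p q : List D.N} {S : Set D.N} {t w : D.N}

theorem mem_H_of_reach (hwt : D.Reach w t) (ht : t ∈ D.Lset i) : w ∈ D.H i :=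
  let ⟨s, hs⟩ := ht
  ⟨t, s, hwt, hs⟩

theorem isRLPath_of_isWalk (hp : p.IsWalk D.edge D.root t) (ht : t ∈ D.Lset i) :
    D.IsRLPath i p :=
  ⟨hp.ne_nil, fun _ hx => mem_H_of_reach (hp.reflTransGen_from_mem hx) ht, hp.1, hp.2.1,
    t, hp.2.2, ht⟩

theorem IsSeparator.mem_of_subset (hS : D.IsSeparator i S) (hp : D.IsRLPath i p)
    (hq : D.IsRLPath i q) (hpq : p ⊆ q) (hwq : w ∈ q) (hwS : w ∈ S) : w ∈ p := by
  obtain ⟨z, ⟨hzp, hzS⟩, -⟩ := hS.2 p hp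
  obtain ⟨_, -, huniq⟩ := hS.2 q hq
  rwa [huniq w ⟨hwq, hwS⟩, ← huniq z ⟨hpq hzp, hzS⟩]

theorem CoveredBy.exists_isSeparator_mem {𝒮 : ∀ _ : Fin D.n, Set (Set D.N)} (h : D.CoveredBy 𝒮)
    (hw : w ∈ D.H i) (hwρ : w ≠ D.root) : ∃ S, D.IsSeparator i S ∧ w ∈ S := by
  obtain ⟨S, hS, hwS⟩ := ((h i).2 ▸ ⟨hw, hwρ⟩ : w ∈ ⋃₀ 𝒮 i)
  exact ⟨S, (h i).1 S hS, hwS⟩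

end NNF

theorem stmt11_general (D : NNF) (hwf : D.WF)
    (v u : D.N) (hvu : D.edge v u)
    (hpath : Relation.TransGen
      (fun p q => D.edge p q ∧ ¬ (p = v ∧ q = u)) v u) :
    ¬ D.Covered := by
  obtain ⟨-, hwfd, -, -, -, hroot, -, hvars⟩ := hwf
  have hacyc := not_transGen_self_of_wellFounded_swap hwfd
  obtain ⟨w, hvw, hwu⟩ := exists_rel_transGen_of_transGen_without hpath
  obtain ⟨i, t, s, hut, hts⟩ := hvars u
  have ht : t ∈ D.Lset i := ⟨s, hts⟩
  obtain ⟨p, q, hp, hq, hpq, hwq, hwp⟩ :=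
    exists_isWalk_subset_bypassing hacyc (hroot v) hvu hvw hwu hut
  have hwρ : w ≠ D.root := by
    rintro rfl
    exact hacyc _ (.tail' (hroot v) hvw)
  rintro ⟨𝒮, h𝒮⟩
  obtain ⟨S, hS, hwS⟩ :=
    h𝒮.exists_isSeparator_mem (NNF.mem_H_of_reach (hwu.to_reflTransGen.trans hut) ht) hwρ
  exact hwp (hS.mem_of_subset (NNF.isRLPath_of_isWalk hp ht) (NNF.isRLPath_of_isWalk hq ht)
    hpq hwq hwS)

/-- If a DNNF `D` contains a transitive edge, then `D`
cannot be covered by separators. -/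
theorem stmt11 (D : NNF) (hwf : D.WF) (hdec : D.Decomposable)
    (v u : D.N) (hvu : D.edge v u)
    (hpath : Relation.TransGen
      (fun p q => D.edge p q ∧ ¬ (p = v ∧ q = u)) v u) :
    ¬ D.Covered :=
  stmt11_general D hwf v u hvu hpath
end
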